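/- arXiv:2102.08689 — 2 statements merged into one kernel-verified Lean document; each statement's English description precedes it below -/
import Mathlib

section
/- Let R' ⊆ ℤ² be a rectangle [x₁, x₂] × [y₁, y₂]. If a grid path (allowing wait moves) starts on the top side {(x, y₁) : x₁ ≤ x ≤ x₂}, ends on the bottom side {(x, y₂) : x₁ ≤ x ≤ x₂}, and every point of the path lies in R', and another such path starts on the left side {(x₁, y) : y₁ ≤ y ≤ y₂}, ends on the right side {(x₂, y) : y₁ ≤ y ≤ y₂}, with all points in R', then the two paths share at least one common vertex. -/
/-!
Put `F i j = q j - p i`. If the paths were disjoint, `F` would avoid the origin on the whole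
parameter grid `[0, n] × [0, m]`. Its four sides are mapped into the four closed half-planes
`x ≤ 0`, `y ≤ 0`, `y ≥ 0`, `x ≥ 0`, so the image of the boundary of the grid winds once around
the origin. On the other hand the winding number, counted as signed crossings of a ray, is additive
over the unit cells of the grid, and each cell has winding number zero: its image is a cycle of
four grid steps, which lies in a closed half-plane, where the crossing count is a telescoping sum.
-/

def manh (a b : ℤ × ℤ) : ℤ := |a.1 - b.1| + |a.2 - b.2|

def inRect (x₁ x₂ y₁ y₂ : ℤ) (a : ℤ × ℤ) : Prop :=
  x₁ ≤ a.1 ∧ a.1 ≤ x₂ ∧ y₁ ≤ a.2 ∧ a.2 ≤ y₂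

open Finset

lemma manh_le_one_iff {a b : ℤ × ℤ} :
    manh a b ≤ 1 ↔ (a.1 = b.1 ∧ -1 ≤ a.2 - b.2 ∧ a.2 - b.2 ≤ 1) ∨
      (a.2 = b.2 ∧ -1 ≤ a.1 - b.1 ∧ a.1 - b.1 ≤ 1) := by
  unfold manh
  rcases abs_cases (a.1 - b.1) with h₁ | h₁ <;> rcases abs_cases (a.2 - b.2) with h₂ | h₂ <;>
    omega

lemma manh_comm (a b : ℤ × ℤ) : manh a b = manh b a := by
  simp only [manh, abs_sub_comm]

lemma manh_sub_sub_left (a b c : ℤ × ℤ) : manh (a - b) (a - c) = manh b c := by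
  simp only [manh, Prod.fst_sub, Prod.snd_sub, sub_sub_sub_cancel_left, abs_sub_comm]

lemma manh_sub_sub_right (a b c : ℤ × ℤ) : manh (a - c) (b - c) = manh a b := by
  simp only [manh, Prod.fst_sub, Prod.snd_sub, sub_sub_sub_cancel_right]

lemma Prod.ne_zero_iff {M N : Type*} [Zero M] [Zero N] {x : M × N} :
    x ≠ 0 ↔ x.1 ≠ 0 ∨ x.2 ≠ 0 := by
  rw [Ne, Prod.ext_iff, not_and_or, Prod.fst_zero, Prod.snd_zero]

/-- For `v ≠ 0`: whether `v` lies above the cut made of the rays `{y = 1/2, x ≥ 1/2}` and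
`{y = -1/2, x ≤ -1/2}`, joined through the origin. -/
def upperSide (v : ℤ × ℤ) : ℤ := if 1 ≤ v.2 ∨ (v.2 = 0 ∧ v.1 ≤ -1) then 1 else 0

/-- Signed crossing of the ray `{y = 1/2, x ≥ 1/2}` by a grid step from `u` to `w`. -/
def rayCrossing (u w : ℤ × ℤ) : ℤ :=
  if u.1 = w.1 ∧ 1 ≤ u.1 then upperSide w - upperSide u else 0

/-- For a closed loop of grid steps avoiding the origin, its winding number around the origin. -/
def pathCrossing (P : ℕ → ℤ × ℤ) (n : ℕ) : ℤ :=
  ∑ i ∈ range n, rayCrossing (P i) (P (i + 1))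

section RayCrossing

variable {u w : ℤ × ℤ}

lemma rayCrossing_eq_zero_of_fst_nonpos (hu : u.1 ≤ 0) : rayCrossing u w = 0 :=
  if_neg (by omega)

lemma rayCrossing_eq_zero_of_snd_nonpos (hu : u.2 ≤ 0) (hw : w.2 ≤ 0) : rayCrossing u w = 0 := by
  unfold rayCrossing upperSide
  split_ifs <;> omega

lemma rayCrossing_eq_of_fst_nonneg (hu : 0 ≤ u.1) (hw : 0 ≤ w.1) (hstep : manh u w ≤ 1)
    (hu₀ : u ≠ 0) (hw₀ : w ≠ 0) : rayCrossing u w = upperSide w - upperSide u := by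
  rw [manh_le_one_iff] at hstep
  rw [Prod.ne_zero_iff] at hu₀ hw₀
  unfold rayCrossing upperSide
  split_ifs <;> omega

lemma rayCrossing_eq_of_snd_nonneg (hu : 0 ≤ u.2) (hw : 0 ≤ w.2) (hstep : manh u w ≤ 1)
    (hu₀ : u ≠ 0) (hw₀ : w ≠ 0) : rayCrossing u w = upperSide w - upperSide u := by
  rw [manh_le_one_iff] at hstep
  rw [Prod.ne_zero_iff] at hu₀ hw₀
  unfold rayCrossing upperSide
  split_ifs <;> omega

end RayCrossing

/-- Leaving all four closed half-planes takes a spread of `2` in both coordinates, hence at least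
four steps. -/
lemma halfPlane_of_three_steps {a b c d : ℤ × ℤ} (hab : manh a b ≤ 1) (hbc : manh b c ≤ 1)
    (hcd : manh c d ≤ 1) :
    (0 ≤ a.1 ∧ 0 ≤ b.1 ∧ 0 ≤ c.1 ∧ 0 ≤ d.1) ∨ (a.1 ≤ 0 ∧ b.1 ≤ 0 ∧ c.1 ≤ 0 ∧ d.1 ≤ 0) ∨
      (0 ≤ a.2 ∧ 0 ≤ b.2 ∧ 0 ≤ c.2 ∧ 0 ≤ d.2) ∨ (a.2 ≤ 0 ∧ b.2 ≤ 0 ∧ c.2 ≤ 0 ∧ d.2 ≤ 0) := by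
  rw [manh_le_one_iff] at hab hbc hcd
  omega

lemma rayCrossing_four_cycle {u v w z : ℤ × ℤ} (huv : manh u v ≤ 1) (hvz : manh v z ≤ 1)
    (huw : manh u w ≤ 1) (hwz : manh w z ≤ 1) (hu : u ≠ 0) (hv : v ≠ 0) (hw : w ≠ 0)
    (hz : z ≠ 0) :
    rayCrossing u v + rayCrossing v z = rayCrossing u w + rayCrossing w z := by
  rcases halfPlane_of_three_steps (manh_comm u v ▸ huv) huw hwz with
    ⟨hv', hu', hw', hz'⟩ | ⟨hv', hu', hw', -⟩ | ⟨hv', hu', hw', hz'⟩ | ⟨hv', hu', hw', hz'⟩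
  · rw [rayCrossing_eq_of_fst_nonneg hu' hv' huv hu hv,
      rayCrossing_eq_of_fst_nonneg hv' hz' hvz hv hz,
      rayCrossing_eq_of_fst_nonneg hu' hw' huw hu hw,
      rayCrossing_eq_of_fst_nonneg hw' hz' hwz hw hz]
    ring
  · simp only [rayCrossing_eq_zero_of_fst_nonpos, hu', hv', hw']
  · rw [rayCrossing_eq_of_snd_nonneg hu' hv' huv hu hv,
      rayCrossing_eq_of_snd_nonneg hv' hz' hvz hv hz,
      rayCrossing_eq_of_snd_nonneg hu' hw' huw hu hw,
      rayCrossing_eq_of_snd_nonneg hw' hz' hwz hw hz]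
    ring
  · simp only [rayCrossing_eq_zero_of_snd_nonpos, hu', hv', hw', hz']

lemma upperSide_eq_one {v : ℤ × ℤ} (hx : v.1 ≤ 0) (hy : 0 ≤ v.2) (hv : v ≠ 0) :
    upperSide v = 1 := by
  rw [Prod.ne_zero_iff] at hv
  exact if_pos (by omega)

lemma upperSide_eq_zero {v : ℤ × ℤ} (hx : 0 ≤ v.1) (hy : v.2 ≤ 0) : upperSide v = 0 :=
  if_neg (by omega)

section PathCrossing

variable {P : ℕ → ℤ × ℤ} {n : ℕ}

lemma pathCrossing_eq_sub (φ : ℤ × ℤ → ℤ)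
    (h : ∀ i < n, rayCrossing (P i) (P (i + 1)) = φ (P (i + 1)) - φ (P i)) :
    pathCrossing P n = φ (P n) - φ (P 0) := by
  rw [pathCrossing, sum_congr rfl fun i hi => h i (mem_range.mp hi)]
  exact sum_range_sub (φ ∘ P) n

lemma pathCrossing_eq_zero_of_fst_nonpos (h : ∀ i < n, (P i).1 ≤ 0) : pathCrossing P n = 0 :=
  sum_eq_zero fun i hi => rayCrossing_eq_zero_of_fst_nonpos (h i (mem_range.mp hi))

lemma pathCrossing_eq_zero_of_snd_nonpos (h : ∀ i ≤ n, (P i).2 ≤ 0) : pathCrossing P n = 0 :=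
  sum_eq_zero fun i hi => by
    have hi : i < n := mem_range.mp hi
    exact rayCrossing_eq_zero_of_snd_nonpos (h i hi.le) (h (i + 1) hi)

lemma pathCrossing_eq_of_fst_nonneg (hstep : ∀ i < n, manh (P i) (P (i + 1)) ≤ 1)
    (h₀ : ∀ i ≤ n, P i ≠ 0) (h : ∀ i ≤ n, 0 ≤ (P i).1) :
    pathCrossing P n = upperSide (P n) - upperSide (P 0) :=
  pathCrossing_eq_sub _ fun i hi => rayCrossing_eq_of_fst_nonneg (h i hi.le) (h (i + 1) hi)
    (hstep i hi) (h₀ i hi.le) (h₀ (i + 1) hi)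

lemma pathCrossing_eq_of_snd_nonneg (hstep : ∀ i < n, manh (P i) (P (i + 1)) ≤ 1)
    (h₀ : ∀ i ≤ n, P i ≠ 0) (h : ∀ i ≤ n, 0 ≤ (P i).2) :
    pathCrossing P n = upperSide (P n) - upperSide (P 0) :=
  pathCrossing_eq_sub _ fun i hi => rayCrossing_eq_of_snd_nonneg (h i hi.le) (h (i + 1) hi)
    (hstep i hi) (h₀ i hi.le) (h₀ (i + 1) hi)

end PathCrossing

lemma pathCrossing_ladder (G H : ℕ → ℤ × ℤ) (n : ℕ) (hG : ∀ i < n, manh (G i) (G (i + 1)) ≤ 1)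
    (hH : ∀ i < n, manh (H i) (H (i + 1)) ≤ 1) (hGH : ∀ i ≤ n, manh (G i) (H i) ≤ 1)
    (hG₀ : ∀ i ≤ n, G i ≠ 0) (hH₀ : ∀ i ≤ n, H i ≠ 0) :
    pathCrossing G n + rayCrossing (G n) (H n) = rayCrossing (G 0) (H 0) + pathCrossing H n := by
  induction n with
  | zero => simp [pathCrossing]
  | succ n ih =>
    have hcell := rayCrossing_four_cycle (hG n n.lt_succ_self) (hGH (n + 1) le_rfl)
      (hGH n n.le_succ) (hH n n.lt_succ_self) (hG₀ n n.le_succ) (hG₀ (n + 1) le_rfl)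
      (hH₀ n n.le_succ) (hH₀ (n + 1) le_rfl)
    have := ih (fun i hi => hG i (by omega)) (fun i hi => hH i (by omega))
      (fun i hi => hGH i (by omega)) (fun i hi => hG₀ i (by omega)) (fun i hi => hH₀ i (by omega))
    simp only [pathCrossing, sum_range_succ] at this ⊢
    linarith

lemma pathCrossing_grid_boundary (F : ℕ → ℕ → ℤ × ℤ) (n m : ℕ)
    (hrow : ∀ i < n, ∀ j ≤ m, manh (F i j) (F (i + 1) j) ≤ 1)
    (hcol : ∀ i ≤ n, ∀ j < m, manh (F i j) (F i (j + 1)) ≤ 1)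
    (hF₀ : ∀ i ≤ n, ∀ j ≤ m, F i j ≠ 0) :
    pathCrossing (F · 0) n + pathCrossing (F n ·) m =
      pathCrossing (F 0 ·) m + pathCrossing (F · m) n := by
  induction m with
  | zero => simp [pathCrossing]
  | succ m ih =>
    have hstrip := pathCrossing_ladder (F · m) (F · (m + 1)) n (fun i hi => hrow i hi m m.le_succ)
      (fun i hi => hrow i hi (m + 1) le_rfl) (fun i hi => hcol i hi m m.lt_succ_self)
      (fun i hi => hF₀ i hi m m.le_succ) (fun i hi => hF₀ i hi (m + 1) le_rfl)
    have := ih (fun i hi j hj => hrow i hi j (by omega)) (fun i hi j hj => hcol i hi j (by omega))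
      (fun i hi j hj => hF₀ i hi j (by omega))
    simp only [pathCrossing, sum_range_succ] at this hstrip ⊢
    linarith

/-- A discrete Poincaré–Miranda theorem. -/
theorem exists_eq_zero_of_grid_sides (F : ℕ → ℕ → ℤ × ℤ) (n m : ℕ)
    (hrow : ∀ i < n, ∀ j ≤ m, manh (F i j) (F (i + 1) j) ≤ 1)
    (hcol : ∀ i ≤ n, ∀ j < m, manh (F i j) (F i (j + 1)) ≤ 1)
    (hleft : ∀ i ≤ n, (F i 0).1 ≤ 0) (hright : ∀ i ≤ n, 0 ≤ (F i m).1)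
    (hbot : ∀ j ≤ m, 0 ≤ (F 0 j).2) (htop : ∀ j ≤ m, (F n j).2 ≤ 0) :
    ∃ i ≤ n, ∃ j ≤ m, F i j = 0 := by
  by_contra! hF₀
  have hgrid := pathCrossing_grid_boundary F n m hrow hcol hF₀
  rw [pathCrossing_eq_zero_of_fst_nonpos fun i hi => hleft i hi.le,
    pathCrossing_eq_zero_of_snd_nonpos htop,
    pathCrossing_eq_of_snd_nonneg (fun j hj => hcol 0 n.zero_le j hj) (hF₀ 0 n.zero_le) hbot,
    pathCrossing_eq_of_fst_nonneg (fun i hi => hrow i hi m le_rfl) (hF₀ · · m le_rfl) hright,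
    upperSide_eq_one (hleft 0 n.zero_le) (hbot 0 m.zero_le) (hF₀ 0 n.zero_le 0 m.zero_le),
    upperSide_eq_zero (hright n le_rfl) (htop m le_rfl)] at hgrid
  linarith

theorem exists_eq_of_crossing_paths (P Q : ℕ → ℤ × ℤ) (n m : ℕ)
    (hP : ∀ i < n, manh (P i) (P (i + 1)) ≤ 1) (hQ : ∀ j < m, manh (Q j) (Q (j + 1)) ≤ 1)
    (hPx : ∀ i ≤ n, (Q 0).1 ≤ (P i).1 ∧ (P i).1 ≤ (Q m).1)
    (hQy : ∀ j ≤ m, (P 0).2 ≤ (Q j).2 ∧ (Q j).2 ≤ (P n).2) :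
    ∃ i ≤ n, ∃ j ≤ m, P i = Q j := by
  obtain ⟨i, hi, j, hj, h⟩ := exists_eq_zero_of_grid_sides (fun i j => Q j - P i) n m
    (fun i hi j _ => by rw [manh_sub_sub_left]; exact hP i hi)
    (fun i _ j hj => by rw [manh_sub_sub_right]; exact hQ j hj)
    (fun i hi => by simpa using (hPx i hi).1) (fun i hi => by simpa using (hPx i hi).2)
    (fun j hj => by simpa using (hQy j hj).1) (fun j hj => by simpa using (hQy j hj).2)
  exact ⟨i, hi, j, hj, (sub_eq_zero.mp h).symm⟩

section NatPath

variable {α : Type*} {n : ℕ} (p : Fin (n + 1) → α)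

def toNatPath (i : ℕ) : α := p ⟨min i n, Nat.lt_succ_of_le (min_le_right i n)⟩

@[simp] lemma toNatPath_zero : toNatPath p 0 = p 0 := rfl

@[simp] lemma toNatPath_last : toNatPath p n = p (Fin.last n) := by
  simp [toNatPath, Fin.last]

lemma toNatPath_step {r : α → α → Prop} (h : ∀ i : Fin n, r (p i.castSucc) (p i.succ)) :
    ∀ i < n, r (toNatPath p i) (toNatPath p (i + 1)) := fun i hi => by
  have hi' : i + 1 ≤ n := hi
  simpa [toNatPath, Nat.min_eq_left hi.le, Nat.min_eq_left hi'] using h ⟨i, hi⟩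

end NatPath

lemma manh_le_one_of_step {a b : ℤ × ℤ} (h : b = a ∨ manh b a = 1) : manh a b ≤ 1 := by
  rcases h with rfl | h
  · simp [manh]
  · rw [manh_comm, h]

theorem discrete_crossing_general (x₁ x₂ y₁ y₂ : ℤ)
    (n m : ℕ) (p : Fin (n + 1) → ℤ × ℤ) (q : Fin (m + 1) → ℤ × ℤ)
    (hpstep : ∀ i : Fin n, p i.succ = p i.castSucc ∨ manh (p i.succ) (p i.castSucc) = 1)
    (hqstep : ∀ j : Fin m, q j.succ = q j.castSucc ∨ manh (q j.succ) (q j.castSucc) = 1)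
    (hp0 : (p 0).2 = y₁) (hpn : (p (Fin.last n)).2 = y₂)
    (hpin : ∀ i, inRect x₁ x₂ y₁ y₂ (p i))
    (hq0 : (q 0).1 = x₁) (hqm : (q (Fin.last m)).1 = x₂)
    (hqin : ∀ j, inRect x₁ x₂ y₁ y₂ (q j)) :
    ∃ i j, p i = q j := by
  obtain ⟨i, -, j, -, h⟩ := exists_eq_of_crossing_paths (toNatPath p) (toNatPath q) n m
    (toNatPath_step p (r := fun a b => manh a b ≤ 1) fun i => manh_le_one_of_step (hpstep i))
    (toNatPath_step q (r := fun a b => manh a b ≤ 1) fun j => manh_le_one_of_step (hqstep j))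
    (fun i _ => by simpa [hq0, hqm] using ⟨(hpin _).1, (hpin _).2.1⟩)
    (fun j _ => by simpa [hp0, hpn] using ⟨(hqin _).2.2.1, (hqin _).2.2.2⟩)
  exact ⟨_, _, h⟩

theorem discrete_crossing (x₁ x₂ y₁ y₂ : ℤ) (hx : x₁ ≤ x₂) (hy : y₁ ≤ y₂)
    (n m : ℕ) (p : Fin (n + 1) → ℤ × ℤ) (q : Fin (m + 1) → ℤ × ℤ)
    (hpstep : ∀ i : Fin n, p i.succ = p i.castSucc ∨ manh (p i.succ) (p i.castSucc) = 1)
    (hqstep : ∀ j : Fin m, q j.succ = q j.castSucc ∨ manh (q j.succ) (q j.castSucc) = 1)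
    (hp0 : (p 0).2 = y₁) (hpn : (p (Fin.last n)).2 = y₂)
    (hpin : ∀ i, inRect x₁ x₂ y₁ y₂ (p i))
    (hq0 : (q 0).1 = x₁) (hqm : (q (Fin.last m)).1 = x₂)
    (hqin : ∀ j, inRect x₁ x₂ y₁ y₂ (q j)) :
    ∃ i j, p i = q j :=
  discrete_crossing_general x₁ x₂ y₁ y₂ n m p q hpstep hqstep hp0 hpn hpin hq0 hqm hqin
end

section
/- Main rectangle conflict theorem (abstract form): Let R' = [x₁, x₂] × [y₁, y₂] ⊆ ℤ², let rt ∈ ℤ be a root time, let u ∈ ℤ², and set ot(v) = rt + Manhattan(u, v). Let 0 ≤ k₁, k₂ ≤ k be integers. Suppose agent 1 is a timed grid walk p₁ : ℤ → ℤ² (consecutive positions equal or Manhattan-adjacent) that crosses R' from the top side to the bottom side, staying inside R' during the crossing, and visits every vertex v ∈ R' on its route at a time in [ot(v), ot(v) + k₂]. Suppose agent 2 is a timed grid walk p₂ crossing R' from the left side to the right side, staying inside R', visiting each of its vertices v at a time in [ot(v), ot(v) + k₁]. Then there exist a vertex v ∈ R' and times t₁, t₂ with p₁(t₁) = p₂(t₂)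 = v and |t₁ - t₂| ≤ k. -/
open Finset

def IsGridStep (p q : ℤ × ℤ) : Prop := q = p ∨ manh q p = 1

def gridMoves : Set (ℤ × ℤ) := {0, (1, 0), (-1, 0), (0, 1), (0, -1)}

section Green

variable {α M : Type*} [AddCommGroup M]

/-- Discrete Green formula on the grid `[0, m] × [0, n]`. -/
theorem sum_boundary_eq_of_square (ω : α → α → M) (D : ℕ → ℕ → α) (m n : ℕ)
    (hsq : ∀ i < m, ∀ j < n,
      ω (D i j) (D (i + 1) j) + ω (D (i + 1) j) (D (i + 1) (j + 1)) =
        ω (D i j) (D i (j + 1)) + ω (D i (j + 1)) (D (i + 1) (j + 1))) :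
    ∑ i ∈ range m, ω (D i 0) (D (i + 1) 0) + ∑ j ∈ range n, ω (D m j) (D m (j + 1)) =
      ∑ j ∈ range n, ω (D 0 j) (D 0 (j + 1)) + ∑ i ∈ range m, ω (D i n) (D (i + 1) n) := by
  set row : ℕ → M := fun j ↦ ∑ i ∈ range m, ω (D i j) (D (i + 1) j)
  set col : ℕ → ℕ → M := fun i j ↦ ω (D i j) (D i (j + 1))
  have hrow : ∀ j < n, row (j + 1) - row j = col m j - col 0 j := by
    intro j hj
    rw [← sum_range_sub (col · j), ← sum_sub_distrib]
    refine sum_congr rfl fun i hi ↦ ?_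
    have := hsq i (mem_range.mp hi) j hj
    rw [sub_eq_sub_iff_add_eq_add, add_comm, this.symm, add_comm]
  have htotal : ∑ j ∈ range n, col m j - ∑ j ∈ range n, col 0 j = row n - row 0 := by
    rw [← sum_sub_distrib, ← sum_range_sub row n]
    exact sum_congr rfl fun j hj ↦ (hrow j (mem_range.mp hj)).symm
  show row 0 + ∑ j ∈ range n, col m j = ∑ j ∈ range n, col 0 j + row n
  rw [sub_eq_sub_iff_add_eq_add] at htotal
  rw [add_comm, htotal, add_comm]

end Green

namespace IsGridStep

variable {p q : ℤ × ℤ}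

lemma sub_mem (h : IsGridStep p q) : q - p ∈ gridMoves := by
  rcases h with rfl | h
  · simp [gridMoves]
  obtain ⟨a, b⟩ := p
  obtain ⟨c, d⟩ := q
  simp only [manh] at h
  simp only [Prod.mk_sub_mk, gridMoves, Set.mem_insert_iff, Set.mem_singleton_iff, Prod.mk.injEq,
    Prod.mk_eq_zero]
  rcases abs_cases (c - a) with ⟨h₁, _⟩ | ⟨h₁, _⟩ <;>
    rcases abs_cases (d - b) with ⟨h₂, _⟩ | ⟨h₂, _⟩ <;> omega

lemma sub_right (h : IsGridStep p q) (c : ℤ × ℤ) : IsGridStep (p - c) (q - c) := by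
  rcases h with rfl | h
  · exact Or.inl rfl
  · right
    simpa only [manh, Prod.fst_sub, Prod.snd_sub, sub_sub_sub_cancel_right] using h

lemma sub_left (h : IsGridStep p q) (c : ℤ × ℤ) : IsGridStep (c - p) (c - q) := by
  rcases h with rfl | h
  · exact Or.inl rfl
  · right
    simpa only [manh, Prod.fst_sub, Prod.snd_sub, sub_sub_sub_cancel_left, abs_sub_comm] using h

end IsGridStep

def aboveAxis (p : ℤ × ℤ) : ℤ := if 1 ≤ p.2 then 1 else 0

def onPosAxis (p : ℤ × ℤ) : ℤ := if 1 ≤ p.1 ∧ p.2 = 0 then 1 else 0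

/-- The discrete 1-form `[x ≥ 1] · d[y ≥ 1]`: along a grid step it counts the signed crossings
of the cut `{x ≥ 1} × (0, 1)`. -/
def windingStep (p q : ℤ × ℤ) : ℤ := if 1 ≤ p.1 then aboveAxis q - aboveAxis p else 0

lemma windingStep_add_add_comm {p α β : ℤ × ℤ} (hα : α ∈ gridMoves) (hβ : β ∈ gridMoves)
    (h₀ : p ≠ 0) (hα₀ : p + α ≠ 0) (hβ₀ : p + β ≠ 0) (hαβ₀ : p + α + β ≠ 0) :
    windingStep p (p + α) + windingStep (p + α) (p + α + β) =
      windingStep p (p + β) + windingStep (p + β) (p + α + β) := by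
  obtain ⟨x, y⟩ := p
  simp only [gridMoves, Set.mem_insert_iff, Set.mem_singleton_iff] at hα hβ
  rcases hα with rfl | rfl | rfl | rfl | rfl <;> rcases hβ with rfl | rfl | rfl | rfl | rfl <;>
    simp only [windingStep, aboveAxis, Prod.mk_add_mk, add_zero, ne_eq, Prod.ext_iff,
      Prod.fst_zero, Prod.snd_zero] at h₀ hα₀ hβ₀ hαβ₀ ⊢ <;>
    split_ifs <;> omega

lemma windingStep_square {p q r s : ℤ × ℤ} (hq : IsGridStep p q) (hr : IsGridStep p r)
    (hs : p + s = q + r) (hp₀ : p ≠ 0) (hq₀ : q ≠ 0) (hr₀ : r ≠ 0) (hs₀ : s ≠ 0) :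
    windingStep p q + windingStep q s = windingStep p r + windingStep r s := by
  have hqs : q + (r - p) = s := by rw [← add_sub_assoc, ← hs, add_sub_cancel_left]
  have key := windingStep_add_add_comm hq.sub_mem hr.sub_mem hp₀
  simp only [add_sub_cancel, hqs] at key
  exact key hq₀ hr₀ hs₀

lemma windingStep_of_fst_nonpos {p q : ℤ × ℤ} (hp : p.1 ≤ 0) : windingStep p q = 0 :=
  if_neg (by omega)

lemma windingStep_of_snd_nonpos {p q : ℤ × ℤ} (hp : p.2 ≤ 0) (hq : q.2 ≤ 0) :
    windingStep p q = 0 := by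
  simp only [windingStep, aboveAxis]
  split_ifs <;> omega

lemma windingStep_of_fst_nonneg {p q : ℤ × ℤ} (h : IsGridStep p q) (hp₀ : p ≠ 0) (hq₀ : q ≠ 0)
    (hp : 0 ≤ p.1) (hq : 0 ≤ q.1) :
    windingStep p q = aboveAxis q - aboveAxis p := by
  have := h.sub_mem
  obtain ⟨a, b⟩ := p
  obtain ⟨c, d⟩ := q
  simp only [Prod.mk_sub_mk, gridMoves, Set.mem_insert_iff, Set.mem_singleton_iff, ne_eq,
    Prod.ext_iff, Prod.fst_zero, Prod.snd_zero] at this hp₀ hq₀ hp hq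
  simp only [windingStep, aboveAxis]
  split_ifs <;> omega

lemma windingStep_of_snd_nonneg {p q : ℤ × ℤ} (h : IsGridStep p q) (hp₀ : p ≠ 0) (hq₀ : q ≠ 0)
    (hp : 0 ≤ p.2) (hq : 0 ≤ q.2) :
    windingStep p q = onPosAxis p - onPosAxis q := by
  have := h.sub_mem
  obtain ⟨a, b⟩ := p
  obtain ⟨c, d⟩ := q
  simp only [Prod.mk_sub_mk, gridMoves, Set.mem_insert_iff, Set.mem_singleton_iff, ne_eq,
    Prod.ext_iff, Prod.fst_zero, Prod.snd_zero] at this hp₀ hq₀ hp hq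
  simp only [windingStep, aboveAxis, onPosAxis]
  split_ifs <;> omega

lemma sum_windingStep_of_fst_nonneg {P : ℕ → ℤ × ℤ} {m : ℕ}
    (hP : ∀ i < m, IsGridStep (P i) (P (i + 1))) (h₀ : ∀ i ≤ m, P i ≠ 0)
    (h₁ : ∀ i ≤ m, 0 ≤ (P i).1) :
    ∑ i ∈ range m, windingStep (P i) (P (i + 1)) = aboveAxis (P m) - aboveAxis (P 0) := by
  refine (sum_congr rfl fun i hi ↦ ?_).trans (sum_range_sub (fun i ↦ aboveAxis (P i)) m)
  have hi := mem_range.mp hi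
  exact windingStep_of_fst_nonneg (hP i hi) (h₀ i hi.le) (h₀ _ hi) (h₁ i hi.le) (h₁ _ hi)

lemma sum_windingStep_of_snd_nonneg {P : ℕ → ℤ × ℤ} {m : ℕ}
    (hP : ∀ i < m, IsGridStep (P i) (P (i + 1))) (h₀ : ∀ i ≤ m, P i ≠ 0)
    (h₂ : ∀ i ≤ m, 0 ≤ (P i).2) :
    ∑ i ∈ range m, windingStep (P i) (P (i + 1)) = onPosAxis (P 0) - onPosAxis (P m) := by
  refine (sum_congr rfl fun i hi ↦ ?_).trans (sum_range_sub' (fun i ↦ onPosAxis (P i)) m)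
  have hi := mem_range.mp hi
  exact windingStep_of_snd_nonneg (hP i hi) (h₀ i hi.le) (h₀ _ hi) (h₂ i hi.le) (h₂ _ hi)

lemma aboveAxis_add_onPosAxis {p : ℤ × ℤ} (h₀ : p ≠ 0) (h₁ : 0 ≤ p.1) (h₂ : 0 ≤ p.2) :
    aboveAxis p + onPosAxis p = 1 := by
  simp only [ne_eq, Prod.ext_iff, Prod.fst_zero, Prod.snd_zero] at h₀
  simp only [aboveAxis, onPosAxis]
  split_ifs <;> omega

theorem exists_eq_of_crossing {x₁ x₂ y₁ y₂ : ℤ} {A B : ℕ → ℤ × ℤ} {m n : ℕ}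
    (hA : ∀ i < m, IsGridStep (A i) (A (i + 1))) (hB : ∀ j < n, IsGridStep (B j) (B (j + 1)))
    (hAx : ∀ i ≤ m, x₁ ≤ (A i).1 ∧ (A i).1 ≤ x₂) (hBy : ∀ j ≤ n, y₁ ≤ (B j).2 ∧ (B j).2 ≤ y₂)
    (hA₀ : (A 0).2 = y₁) (hAm : (A m).2 = y₂) (hB₀ : (B 0).1 = x₁) (hBn : (B n).1 = x₂) :
    ∃ i ≤ m, ∃ j ≤ n, A i = B j := by
  by_contra! hne
  set D : ℕ → ℕ → ℤ × ℤ := fun i j ↦ A i - B j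
  have hD₀ : ∀ i ≤ m, ∀ j ≤ n, D i j ≠ 0 := fun i hi j hj ↦ sub_ne_zero.mpr (hne i hi j hj)
  have hfst_B₀ : ∀ i ≤ m, 0 ≤ (D i 0).1 := fun i hi ↦ by
    have := hAx i hi; simp only [D, Prod.fst_sub]; omega
  have hfst_Bn : ∀ i ≤ m, (D i n).1 ≤ 0 := fun i hi ↦ by
    have := hAx i hi; simp only [D, Prod.fst_sub]; omega
  have hsnd_A₀ : ∀ j ≤ n, (D 0 j).2 ≤ 0 := fun j hj ↦ by
    have := hBy j hj; simp only [D, Prod.snd_sub]; omega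
  have hsnd_Am : ∀ j ≤ n, 0 ≤ (D m j).2 := fun j hj ↦ by
    have := hBy j hj; simp only [D, Prod.snd_sub]; omega
  have hgreen := sum_boundary_eq_of_square windingStep D m n fun i hi j hj ↦
    windingStep_square ((hA i hi).sub_right _) ((hB j hj).sub_left _) (by simp only [D]; abel)
      (hD₀ i hi.le j hj.le) (hD₀ (i + 1) hi j hj.le) (hD₀ i hi.le (j + 1) hj)
      (hD₀ (i + 1) hi (j + 1) hj)
  have hsum_B₀ : ∑ i ∈ range m, windingStep (D i 0) (D (i + 1) 0) = aboveAxis (D m 0) := by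
    have h₀₀ : aboveAxis (D 0 0) = 0 := if_neg (by have := hsnd_A₀ 0 n.zero_le; omega)
    rw [sum_windingStep_of_fst_nonneg (P := (D · 0)) (fun i hi ↦ (hA i hi).sub_right _)
      (fun i hi ↦ hD₀ i hi 0 n.zero_le) hfst_B₀, h₀₀, sub_zero]
  have hsum_Am : ∑ j ∈ range n, windingStep (D m j) (D m (j + 1)) = onPosAxis (D m 0) := by
    have hmn : onPosAxis (D m n) = 0 := if_neg (by have := hfst_Bn m le_rfl; omega)
    rw [sum_windingStep_of_snd_nonneg (P := (D m ·)) (fun j hj ↦ (hB j hj).sub_left _)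
      (fun j hj ↦ hD₀ m le_rfl j hj) hsnd_Am, hmn, sub_zero]
  have hsum_A₀ : ∑ j ∈ range n, windingStep (D 0 j) (D 0 (j + 1)) = 0 :=
    sum_eq_zero fun j hj ↦ windingStep_of_snd_nonpos (hsnd_A₀ j (mem_range.mp hj).le)
      (hsnd_A₀ (j + 1) (mem_range.mp hj))
  have hsum_Bn : ∑ i ∈ range m, windingStep (D i n) (D (i + 1) n) = 0 :=
    sum_eq_zero fun i hi ↦ windingStep_of_fst_nonpos (hfst_Bn i (mem_range.mp hi).le)
  rw [hsum_B₀, hsum_Am, hsum_A₀, hsum_Bn, aboveAxis_add_onPosAxis (hD₀ m le_rfl 0 n.zero_le)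
    (hfst_B₀ m le_rfl) (hsnd_Am 0 n.zero_le)] at hgreen
  exact one_ne_zero hgreen

theorem exists_eq_of_crossing_int {x₁ x₂ y₁ y₂ : ℤ} {p₁ p₂ : ℤ → ℤ × ℤ} {s₁ s₁' s₂ s₂' : ℤ}
    (hstep₁ : ∀ t, IsGridStep (p₁ t) (p₁ (t + 1))) (hstep₂ : ∀ t, IsGridStep (p₂ t) (p₂ (t + 1)))
    (hs₁ : s₁ ≤ s₁') (hs₂ : s₂ ≤ s₂')
    (hx : ∀ t, s₁ ≤ t → t ≤ s₁' → x₁ ≤ (p₁ t).1 ∧ (p₁ t).1 ≤ x₂)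
    (hy : ∀ t, s₂ ≤ t → t ≤ s₂' → y₁ ≤ (p₂ t).2 ∧ (p₂ t).2 ≤ y₂)
    (htop : (p₁ s₁).2 = y₁) (hbottom : (p₁ s₁').2 = y₂)
    (hleft : (p₂ s₂).1 = x₁) (hright : (p₂ s₂').1 = x₂) :
    ∃ t₁ t₂, s₁ ≤ t₁ ∧ t₁ ≤ s₁' ∧ s₂ ≤ t₂ ∧ t₂ ≤ s₂' ∧ p₁ t₁ = p₂ t₂ := by
  have hend : ∀ s s' : ℤ, s ≤ s' → s + ((s' - s).toNat : ℕ) = s' := fun s s' h ↦ by omega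
  obtain ⟨i, hi, j, hj, hij⟩ := exists_eq_of_crossing (A := fun i : ℕ ↦ p₁ (s₁ + i))
    (B := fun j : ℕ ↦ p₂ (s₂ + j)) (m := (s₁' - s₁).toNat) (n := (s₂' - s₂).toNat)
    (fun i _ ↦ by simpa only [Nat.cast_succ, add_assoc] using hstep₁ (s₁ + i))
    (fun j _ ↦ by simpa only [Nat.cast_succ, add_assoc] using hstep₂ (s₂ + j))
    (fun i hi ↦ hx _ (by omega) (by omega)) (fun j hj ↦ hy _ (by omega) (by omega))
    (by simpa using htop) (by simp only [hend _ _ hs₁, hbottom])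
    (by simpa using hleft) (by simp only [hend _ _ hs₂, hright])
  exact ⟨s₁ + i, s₂ + j, by omega, by omega, by omega, by omega, hij⟩

theorem rectangle_conflict_general (x₁ x₂ y₁ y₂ : ℤ)
    (rt : ℤ) (u : ℤ × ℤ) (k₁ k₂ k : ℤ)
    (hk₁k : k₁ ≤ k) (hk₂k : k₂ ≤ k)
    (p₁ p₂ : ℤ → ℤ × ℤ)
    (hstep₁ : ∀ t : ℤ, p₁ (t + 1) = p₁ t ∨ manh (p₁ (t + 1)) (p₁ t) = 1)
    (hstep₂ : ∀ t : ℤ, p₂ (t + 1) = p₂ t ∨ manh (p₂ (t + 1)) (p₂ t) = 1)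
    (s₁ s₁' : ℤ) (hs₁ : s₁ ≤ s₁')
    (hcross₁ : (p₁ s₁).2 = y₁ ∧ (p₁ s₁').2 = y₂ ∧
      ∀ t, s₁ ≤ t → t ≤ s₁' → inRect x₁ x₂ y₁ y₂ (p₁ t))
    (htime₁ : ∀ t, s₁ ≤ t → t ≤ s₁' →
      rt + manh u (p₁ t) ≤ t ∧ t ≤ rt + manh u (p₁ t) + k₂)
    (s₂ s₂' : ℤ) (hs₂ : s₂ ≤ s₂')
    (hcross₂ : (p₂ s₂).1 = x₁ ∧ (p₂ s₂').1 = x₂ ∧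
      ∀ t, s₂ ≤ t → t ≤ s₂' → inRect x₁ x₂ y₁ y₂ (p₂ t))
    (htime₂ : ∀ t, s₂ ≤ t → t ≤ s₂' →
      rt + manh u (p₂ t) ≤ t ∧ t ≤ rt + manh u (p₂ t) + k₁) :
    ∃ (v : ℤ × ℤ) (t₁ t₂ : ℤ), inRect x₁ x₂ y₁ y₂ v ∧
      p₁ t₁ = v ∧ p₂ t₂ = v ∧ |t₁ - t₂| ≤ k := by
  obtain ⟨htop, hbottom, hin₁⟩ := hcross₁
  obtain ⟨hleft, hright, hin₂⟩ := hcross₂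
  obtain ⟨t₁, t₂, h₁, h₁', h₂, h₂', hmeet⟩ := exists_eq_of_crossing_int hstep₁ hstep₂ hs₁ hs₂
    (fun t h h' ↦ ⟨(hin₁ t h h').1, (hin₁ t h h').2.1⟩)
    (fun t h h' ↦ ⟨(hin₂ t h h').2.2.1, (hin₂ t h h').2.2.2⟩) htop hbottom hleft hright
  have hwin₁ := htime₁ t₁ h₁ h₁'
  have hwin₂ := htime₂ t₂ h₂ h₂'
  rw [hmeet] at hwin₁
  exact ⟨p₁ t₁, t₁, t₂, hin₁ t₁ h₁ h₁', rfl, hmeet.symm, abs_le.mpr ⟨by omega, by omega⟩⟩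

theorem rectangle_conflict (x₁ x₂ y₁ y₂ : ℤ) (hx : x₁ ≤ x₂) (hy : y₁ ≤ y₂)
    (rt : ℤ) (u : ℤ × ℤ) (k₁ k₂ k : ℤ)
    (hk₁ : 0 ≤ k₁) (hk₂ : 0 ≤ k₂) (hk₁k : k₁ ≤ k) (hk₂k : k₂ ≤ k)
    (p₁ p₂ : ℤ → ℤ × ℤ)
    (hstep₁ : ∀ t : ℤ, p₁ (t + 1) = p₁ t ∨ manh (p₁ (t + 1)) (p₁ t) = 1)
    (hstep₂ : ∀ t : ℤ, p₂ (t + 1) = p₂ t ∨ manh (p₂ (t + 1)) (p₂ t) = 1)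
    (s₁ s₁' : ℤ) (hs₁ : s₁ ≤ s₁')
    (hcross₁ : (p₁ s₁).2 = y₁ ∧ (p₁ s₁').2 = y₂ ∧
      ∀ t, s₁ ≤ t → t ≤ s₁' → inRect x₁ x₂ y₁ y₂ (p₁ t))
    (htime₁ : ∀ t, s₁ ≤ t → t ≤ s₁' →
      rt + manh u (p₁ t) ≤ t ∧ t ≤ rt + manh u (p₁ t) + k₂)
    (s₂ s₂' : ℤ) (hs₂ : s₂ ≤ s₂')
    (hcross₂ : (p₂ s₂).1 = x₁ ∧ (p₂ s₂').1 = x₂ ∧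
      ∀ t, s₂ ≤ t → t ≤ s₂' → inRect x₁ x₂ y₁ y₂ (p₂ t))
    (htime₂ : ∀ t, s₂ ≤ t → t ≤ s₂' →
      rt + manh u (p₂ t) ≤ t ∧ t ≤ rt + manh u (p₂ t) + k₁) :
    ∃ (v : ℤ × ℤ) (t₁ t₂ : ℤ), inRect x₁ x₂ y₁ y₂ v ∧
      p₁ t₁ = v ∧ p₂ t₂ = v ∧ |t₁ - t₂| ≤ k :=
  rectangle_conflict_general x₁ x₂ y₁ y₂ rt u k₁ k₂ k hk₁k hk₂k p₁ p₂ hstep₁ hstep₂ s₁ s₁' hs₁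
    hcross₁ htime₁ s₂ s₂' hs₂ hcross₂ htime₂
end
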